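/- Let (X,d) be a CAT(0) space and A ⊆ X a nonempty convex set. If there is a play of the Lion-Man game in A (for some speed D > 0) in which the man wins, then for every k > 0 there exists a k-local √2-quasi-geodesic ray whose image is contained in A. -/

import Mathlib

open Set Filter Metric

section Defs

variable {X : Type*} [MetricSpace X]

/-- A unit-speed geodesic defined on `[a, b]`. -/
def IsGeodesicOn (γ : ℝ → X) (a b : ℝ) : Prop :=
  ∀ s ∈ Set.Icc a b, ∀ t ∈ Set.Icc a b, dist (γ s) (γ t) = |s - t|

/-- `S` is a geodesic segment joining `x` and `y`. -/
def IsGeodesicSegment (S : Set X) (x y : X) : Prop :=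
  ∃ (a b : ℝ) (γ : ℝ → X), a ≤ b ∧ IsGeodesicOn γ a b ∧ γ a = x ∧ γ b = y ∧
    S = γ '' Set.Icc a b

/-- A geodesic space: every two points are joined by a geodesic segment. -/
def GeodesicSpace (X : Type*) [MetricSpace X] : Prop :=
  ∀ x y : X, ∃ S : Set X, IsGeodesicSegment S x y

/-- A uniquely geodesic space. -/
def UniquelyGeodesic (X : Type*) [MetricSpace X] : Prop :=
  ∀ x y : X, ∃! S : Set X, IsGeodesicSegment S x y

/-- `S` is contained in the closed `M`-neighborhood of `T`. -/
def InClosedNbhd (S T : Set X) (M : ℝ) : Prop :=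
  ∀ p ∈ S, ∃ q ∈ T, dist p q ≤ M

/-- A triangle with sides `S1, S2, S3` is `M`-slim. -/
def SlimTriangle (S1 S2 S3 : Set X) (M : ℝ) : Prop :=
  InClosedNbhd S1 (S2 ∪ S3) M ∧ InClosedNbhd S2 (S1 ∪ S3) M ∧ InClosedNbhd S3 (S1 ∪ S2) M

/-- `X` is `δ`-hyperbolic: every geodesic triangle is `δ`-slim. -/
def DeltaHyperbolic (X : Type*) [MetricSpace X] (δ : ℝ) : Prop :=
  ∀ x y z : X, ∀ S1 S2 S3 : Set X,
    IsGeodesicSegment S1 x y → IsGeodesicSegment S2 y z → IsGeodesicSegment S3 z x →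
    SlimTriangle S1 S2 S3 δ

/-- A geodesic ray `γ : [0, ∞) → X`. -/
def IsGeodesicRay (γ : ℝ → X) : Prop :=
  ∀ s ∈ Set.Ici (0:ℝ), ∀ t ∈ Set.Ici (0:ℝ), dist (γ s) (γ t) = |s - t|

/-- A set is geodesically bounded if it contains no geodesic ray. -/
def GeodesicallyBounded (A : Set X) : Prop :=
  ¬ ∃ γ : ℝ → X, IsGeodesicRay γ ∧ ∀ t ∈ Set.Ici (0:ℝ), γ t ∈ A

/-- A directional curve `γ : [0, ∞) → X` (with some constant `b ≥ 0`). -/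
def IsDirectionalCurve (γ : ℝ → X) : Prop :=
  ∃ b : ℝ, 0 ≤ b ∧ ∀ s ∈ Set.Ici (0:ℝ), ∀ t ∈ Set.Ici (0:ℝ),
    |s - t| - b ≤ dist (γ s) (γ t) ∧ dist (γ s) (γ t) ≤ |s - t|

/-- A set is directionally bounded if it contains no directional curve. -/
def DirectionallyBounded (A : Set X) : Prop :=
  ¬ ∃ γ : ℝ → X, IsDirectionalCurve γ ∧ ∀ t ∈ Set.Ici (0:ℝ), γ t ∈ A

/-- A subset of a geodesic space is convex if every geodesic segment joining two of its
points is contained in it. -/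
def GeodesicConvex (A : Set X) : Prop :=
  ∀ x ∈ A, ∀ y ∈ A, ∀ S : Set X, IsGeodesicSegment S x y → S ⊆ A

/-- The comparison point in the Euclidean plane: the point on the segment from `x'` to `y'`
(of length `L`) at distance `t` from `x'`. -/
noncomputable def cmpPt (x' y' : EuclideanSpace ℝ (Fin 2)) (L t : ℝ) :
    EuclideanSpace ℝ (Fin 2) :=
  AffineMap.lineMap x' y' (t / L)

/-- `X` is a CAT(0) space: it is geodesic and for every geodesic triangle and every
comparison triangle in the Euclidean plane, distances between points on the triangle are
bounded by the distances between the corresponding comparison points. -/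
def CAT0Space (X : Type*) [MetricSpace X] : Prop :=
  GeodesicSpace X ∧
  ∀ (x y z : X) (γ1 γ2 γ3 : ℝ → X),
    IsGeodesicOn γ1 0 (dist x y) → γ1 0 = x → γ1 (dist x y) = y →
    IsGeodesicOn γ2 0 (dist y z) → γ2 0 = y → γ2 (dist y z) = z →
    IsGeodesicOn γ3 0 (dist z x) → γ3 0 = z → γ3 (dist z x) = x →
    ∀ x' y' z' : EuclideanSpace ℝ (Fin 2),
      dist x' y' = dist x y → dist y' z' = dist y z → dist z' x' = dist z x →
      (∀ s ∈ Set.Icc (0:ℝ) (dist x y), ∀ t ∈ Set.Icc (0:ℝ) (dist y z),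
        dist (γ1 s) (γ2 t) ≤ dist (cmpPt x' y' (dist x y) s) (cmpPt y' z' (dist y z) t)) ∧
      (∀ s ∈ Set.Icc (0:ℝ) (dist y z), ∀ t ∈ Set.Icc (0:ℝ) (dist z x),
        dist (γ2 s) (γ3 t) ≤ dist (cmpPt y' z' (dist y z) s) (cmpPt z' x' (dist z x) t)) ∧
      (∀ s ∈ Set.Icc (0:ℝ) (dist z x), ∀ t ∈ Set.Icc (0:ℝ) (dist x y),
        dist (γ3 s) (γ1 t) ≤ dist (cmpPt z' x' (dist z x) s) (cmpPt x' y' (dist x y) t))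

/-- Busemann convexity. -/
def BusemannConvex (X : Type*) [MetricSpace X] : Prop :=
  GeodesicSpace X ∧
  ∀ (a b c d : ℝ) (γ σ : ℝ → X), a ≤ b → c ≤ d →
    IsGeodesicOn γ a b → IsGeodesicOn σ c d →
    ∀ t ∈ Set.Icc (0:ℝ) 1,
      dist (γ ((1-t)*a + t*b)) (σ ((1-t)*c + t*d)) ≤
        (1-t) * dist (γ a) (σ c) + t * dist (γ b) (σ d)

/-- A `(lam, eps)`-quasi-geodesic defined on `[a, b]`. -/
def IsQuasiGeodesicOn (lam eps : ℝ) (γ : ℝ → X) (a b : ℝ) : Prop :=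
  ∀ s ∈ Set.Icc a b, ∀ t ∈ Set.Icc a b,
    (1/lam) * |s - t| - eps ≤ dist (γ s) (γ t) ∧ dist (γ s) (γ t) ≤ lam * |s - t| + eps

/-- A `(lam, eps)`-quasi-geodesic ray. -/
def IsQuasiGeodesicRay (lam eps : ℝ) (γ : ℝ → X) : Prop :=
  ∀ s ∈ Set.Ici (0:ℝ), ∀ t ∈ Set.Ici (0:ℝ),
    (1/lam) * |s - t| - eps ≤ dist (γ s) (γ t) ∧ dist (γ s) (γ t) ≤ lam * |s - t| + eps

/-- A `k`-local `lam`-quasi-geodesic ray: a `(lam, eps)`-quasi-geodesic ray locally,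
for every `eps > 0`. -/
def IsLocalQuasiGeodesicRay (k lam : ℝ) (γ : ℝ → X) : Prop :=
  ∀ eps > (0:ℝ), ∀ s ∈ Set.Ici (0:ℝ), ∀ t ∈ Set.Ici (0:ℝ), |s - t| ≤ k →
    (1/lam) * |s - t| - eps ≤ dist (γ s) (γ t) ∧ dist (γ s) (γ t) ≤ lam * |s - t| + eps

/-- `S` is the image of a `lam`-quasi-geodesic joining `x` and `y`
(i.e. a `(lam, eps)`-quasi-geodesic for every `eps > 0`). -/
def IsQuasiGeodesicSegment (lam : ℝ) (S : Set X) (x y : X) : Prop :=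
  ∃ (a b : ℝ) (γ : ℝ → X), a ≤ b ∧ (∀ eps > (0:ℝ), IsQuasiGeodesicOn lam eps γ a b) ∧
    γ a = x ∧ γ b = y ∧ S = γ '' Set.Icc a b

/-- Every `lam`-quasi-geodesic triangle in `X` is `M`-slim. -/
def QuasiGeodesicTrianglesSlim (X : Type*) [MetricSpace X] (lam M : ℝ) : Prop :=
  ∀ x y z : X, ∀ S1 S2 S3 : Set X,
    IsQuasiGeodesicSegment lam S1 x y → IsQuasiGeodesicSegment lam S2 y z →
    IsQuasiGeodesicSegment lam S3 z x → SlimTriangle S1 S2 S3 M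

/-- A play of the Lion-Man game in `A` with speed `D`. -/
def IsLionManPlay (A : Set X) (D : ℝ) (L M : ℕ → X) : Prop :=
  (∀ n, L n ∈ A) ∧ (∀ n, M n ∈ A) ∧
  (∀ n, ∃ S : Set X, IsGeodesicSegment S (L n) (M n) ∧ L (n+1) ∈ S) ∧
  (∀ n, dist (L n) (L (n+1)) = min D (dist (L n) (M n))) ∧
  (∀ n, dist (M n) (M (n+1)) ≤ D)

/-- The lion wins a play if `d(L_{n+1}, M_n) → 0`. -/
def LionWins (L M : ℕ → X) : Prop :=
  Filter.Tendsto (fun n => dist (L (n+1)) (M n)) Filter.atTop (nhds 0)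

/-- The lion always wins the Lion-Man game played in `A`. -/
def LionAlwaysWins (A : Set X) : Prop :=
  ∀ D > (0:ℝ), ∀ L M : ℕ → X, IsLionManPlay A D L M → LionWins L M

end Defs

/-!
If the man wins, the gaps `d(L (n+1), M n)` decrease to a limit `r > 0`. From some round on the
lion therefore always runs the full distance `D` towards the man, while the gaps stay within a
small `η` of `r`, and the candidate ray is the lion's path: the concatenation of the segments
`[L n, L (n+1)]` parametrised by arc length, which is 1-Lipschitz. Since `M n`, `L (n+1)` and
`M (n+1)` form an almost degenerate triangle, the CAT(0) comparison shows that `M n` lies within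
`√(2 (r + η) η)` of the geodesic `[L (n+1), M (n+1)]` and that the path turns by a small angle
at `L (n+1)`; the latter gives the factor `1/√2` on short pieces. On longer pieces, convexity of
the distance function along `[L (n+1), M (n+1)]` propagates round by round the estimate that the
man recedes from any point of the path by almost `D` per round, with an error that grows
geometrically but stays below `(1 - 1/√2) · min (2r/5) D` for the boundedly many rounds a piece
of length `≤ k` spans.
-/

open Topology

section Geodesic

variable {X : Type*} [MetricSpace X]

theorem IsGeodesicOn.dist_eq_sub {σ : ℝ → X} {a b s t : ℝ} (hσ : IsGeodesicOn σ a b)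
    (hs : s ∈ Icc a b) (ht : t ∈ Icc a b) (hst : s ≤ t) : dist (σ s) (σ t) = t - s := by
  rw [hσ s hs t ht, abs_sub_comm, abs_of_nonneg (sub_nonneg.2 hst)]

theorem IsGeodesicOn.dist_endpoints {σ : ℝ → X} {c : ℝ} (hσ : IsGeodesicOn σ 0 c)
    (hc : 0 ≤ c) : dist (σ 0) (σ c) = c := by
  simpa using hσ.dist_eq_sub ⟨le_rfl, hc⟩ ⟨hc, le_rfl⟩ hc

theorem IsGeodesicOn.dist_triangle_endpoints {σ : ℝ → X} {c : ℝ} (hσ : IsGeodesicOn σ 0 c)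
    (hc : 0 ≤ c) (p : X) :
    dist p (σ 0) ≤ dist p (σ c) + c ∧ dist p (σ c) ≤ dist p (σ 0) + c ∧
      c ≤ dist p (σ 0) + dist p (σ c) := by
  have hlen := hσ.dist_endpoints hc
  refine ⟨?_, ?_, ?_⟩
  · linarith [dist_triangle p (σ c) (σ 0), dist_comm (σ c) (σ 0)]
  · linarith [dist_triangle p (σ 0) (σ c)]
  · linarith [dist_triangle (σ 0) p (σ c), dist_comm (σ 0) p]

theorem IsGeodesicSegment.exists_isGeodesicOn {S : Set X} {x y : X}
    (h : IsGeodesicSegment S x y) :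
    ∃ g : ℝ → X, IsGeodesicOn g 0 (dist x y) ∧ g 0 = x ∧ g (dist x y) = y ∧
      g '' Icc 0 (dist x y) = S := by
  obtain ⟨a, b, g, hab, hg, rfl, rfl, rfl⟩ := h
  have hlen : dist (g a) (g b) = b - a := hg.dist_eq_sub ⟨le_rfl, hab⟩ ⟨hab, le_rfl⟩ hab
  refine ⟨fun w => g (a + w), ?_, by simp, by simp [hlen], ?_⟩
  · intro s hs t ht
    rw [hlen] at hs ht
    rw [hg _ ⟨by linarith [hs.1], by linarith [hs.2]⟩ _
      ⟨by linarith [ht.1], by linarith [ht.2]⟩]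
    ring_nf
  · rw [hlen, ← image_image g (a + ·), image_const_add_Icc]
    simp

theorem GeodesicSpace.exists_isGeodesicOn (hX : GeodesicSpace X) (x y : X) :
    ∃ g : ℝ → X, IsGeodesicOn g 0 (dist x y) ∧ g 0 = x ∧ g (dist x y) = y := by
  obtain ⟨S, hS⟩ := hX x y
  obtain ⟨g, hg, hg0, hg1, -⟩ := hS.exists_isGeodesicOn
  exact ⟨g, hg, hg0, hg1⟩

theorem IsGeodesicSegment.dist_add_dist_eq {S : Set X} {x y p : X}
    (hS : IsGeodesicSegment S x y) (hp : p ∈ S) : dist x p + dist p y = dist x y := by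
  obtain ⟨g, hg, rfl, hgy, rfl⟩ := hS.exists_isGeodesicOn
  obtain ⟨w, hw, rfl⟩ := hp
  have hc : dist (g 0) y ∈ Icc 0 (dist (g 0) y) := ⟨dist_nonneg, le_rfl⟩
  conv_lhs => rw [← hgy]
  rw [hg.dist_eq_sub ⟨le_rfl, dist_nonneg⟩ hw hw.1, hg.dist_eq_sub hw hc hw.2]
  ring

theorem mem_Icc_add_dist {a α : ℝ} (hα : α ∈ Icc 0 a) (x y : X) :
    α ∈ Icc 0 (a + dist x y) :=
  ⟨hα.1, hα.2.trans (le_add_of_nonneg_right dist_nonneg)⟩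

end Geodesic

theorem dist_euclidean_pair (a b a' b' : ℝ) :
    dist !₂[a, b] !₂[a', b'] = √((a - a') ^ 2 + (b - b') ^ 2) := by
  simp [EuclideanSpace.dist_eq, Fin.sum_univ_two, Real.dist_eq, sq_abs]

theorem cmpPt_zero_left (x' y' : EuclideanSpace ℝ (Fin 2)) (L : ℝ) : cmpPt x' y' L 0 = x' := by
  simp [cmpPt]

theorem cmpPt_horizontal {c : ℝ} (hc : c ≠ 0) (t : ℝ) :
    cmpPt !₂[0, 0] !₂[c, 0] c t = !₂[t, 0] := by
  ext i
  fin_cases i <;> simp [cmpPt, AffineMap.lineMap_apply, hc]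

theorem foot_mem_Icc {ρ τ c η : ℝ} (hc : 0 < c) (h₁ : ρ ≤ τ + c) (h₂ : τ ≤ ρ + c)
    (h₃ : c ≤ ρ + τ) (hη : ρ + τ ≤ c + η) :
    (ρ ^ 2 + c ^ 2 - τ ^ 2) / (2 * c) ∈ Icc (ρ - η) ρ := by
  have key : ρ - (ρ ^ 2 + c ^ 2 - τ ^ 2) / (2 * c) =
      (τ - (c - ρ)) * (τ + (c - ρ)) / (2 * c) := by
    field_simp
    ring
  constructor
  · have : (τ - (c - ρ)) * (τ + (c - ρ)) / (2 * c) ≤ η := by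
      rw [div_le_iff₀ (by positivity)]
      exact mul_le_mul (by linarith) (by linarith) (by linarith) (by linarith)
    linarith
  · have : 0 ≤ (τ - (c - ρ)) * (τ + (c - ρ)) / (2 * c) := by
      exact div_nonneg (mul_nonneg (by linarith) (by linarith)) (by positivity)
    linarith

namespace CAT0Space

variable {X : Type*} [MetricSpace X]

/-- The law of cosines in the comparison triangle of `p, σ 0, σ c`. -/
theorem dist_sq_le (hX : CAT0Space X) {σ : ℝ → X} {c : ℝ} (hc : 0 < c)
    (hσ : IsGeodesicOn σ 0 c) (p : X) {t : ℝ} (ht : t ∈ Icc 0 c) :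
    dist p (σ t) ^ 2 ≤
      dist p (σ 0) ^ 2 - t * (dist p (σ 0) ^ 2 + c ^ 2 - dist p (σ c) ^ 2) / c + t ^ 2 := by
  set ρ := dist p (σ 0)
  set τ := dist p (σ c)
  have hlen := hσ.dist_endpoints hc.le
  obtain ⟨h₁, h₂, h₃⟩ := hσ.dist_triangle_endpoints hc.le p
  -- the apex of the comparison triangle is `(z, h)`, with `[σ 0, σ c]` along the first axis
  set z := (ρ ^ 2 + c ^ 2 - τ ^ 2) / (2 * c)
  have hz : z ^ 2 ≤ ρ ^ 2 := by
    apply sq_le_sq'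
    · rw [le_div_iff₀ (by positivity)]; nlinarith
    · rw [div_le_iff₀ (by positivity)]; nlinarith
  set h := √(ρ ^ 2 - z ^ 2)
  have hh : h ^ 2 = ρ ^ 2 - z ^ 2 := Real.sq_sqrt (by linarith)
  have hp' : dist !₂[z, h] !₂[0, 0] = ρ := by
    rw [dist_euclidean_pair, sub_zero, sub_zero, hh, add_sub_cancel, Real.sqrt_sq dist_nonneg]
  have hx' : dist !₂[(0 : ℝ), 0] !₂[c, 0] = c := by
    rw [dist_euclidean_pair]; simp [hc.le]
  have hzc : 2 * c * z = ρ ^ 2 + c ^ 2 - τ ^ 2 := mul_div_cancel₀ _ (by positivity)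
  have hy' : dist !₂[c, 0] !₂[z, h] = τ := by
    rw [dist_euclidean_pair, Real.sqrt_eq_iff_eq_sq (by positivity) dist_nonneg]
    linear_combination hh - hzc
  obtain ⟨γ₁, hγ₁, hγ₁0, hγ₁1⟩ := hX.1.exists_isGeodesicOn p (σ 0)
  obtain ⟨γ₃, hγ₃, hγ₃0, hγ₃1⟩ := hX.1.exists_isGeodesicOn (σ c) p
  have hcmp := (hX.2 p (σ 0) (σ c) γ₁ σ γ₃ hγ₁ hγ₁0 hγ₁1 (by rw [hlen]; exact hσ)
    rfl (by rw [hlen]) hγ₃ hγ₃0 hγ₃1 !₂[z, h] !₂[0, 0] !₂[c, 0] hp'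
    (by rw [hx', hlen]) (by rw [hy', dist_comm])).1 0 ⟨le_rfl, dist_nonneg⟩ t
    (by rw [hlen]; exact ht)
  rw [hγ₁0, cmpPt_zero_left, hlen, cmpPt_horizontal hc.ne', dist_euclidean_pair] at hcmp
  calc dist p (σ t) ^ 2 ≤ √((z - t) ^ 2 + (h - 0) ^ 2) ^ 2 := by gcongr
    _ = _ := by
      rw [Real.sq_sqrt (by positivity), sub_zero, hh, ← hzc]
      field_simp
      ring

theorem mul_dist_le (hX : CAT0Space X) {σ : ℝ → X} {c : ℝ} (hc : 0 < c)
    (hσ : IsGeodesicOn σ 0 c) (p : X) {t : ℝ} (ht : t ∈ Icc 0 c) :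
    c * dist p (σ t) ≤ (c - t) * dist p (σ 0) + t * dist p (σ c) := by
  set ρ := dist p (σ 0)
  set τ := dist p (σ c)
  obtain ⟨h₁, h₂, -⟩ := hσ.dist_triangle_endpoints hc.le p
  have hgap : c ^ 2 * (ρ ^ 2 - t * (ρ ^ 2 + c ^ 2 - τ ^ 2) / c + t ^ 2) +
      t * (c - t) * ((c - (ρ - τ)) * (c + (ρ - τ))) = ((c - t) * ρ + t * τ) ^ 2 := by
    field_simp
    ring
  have hρ : 0 ≤ ρ := dist_nonneg
  have hτ : 0 ≤ τ := dist_nonneg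
  refine (abs_le_of_sq_le_sq' ?_ (by nlinarith [ht.1, ht.2])).2
  have hsq := hX.dist_sq_le hc hσ p ht
  have := mul_nonneg (mul_nonneg ht.1 (sub_nonneg.2 ht.2))
    (mul_nonneg (by linarith : 0 ≤ c - (ρ - τ)) (by linarith : 0 ≤ c + (ρ - τ)))
  rw [mul_pow, ← hgap]
  nlinarith [mul_le_mul_of_nonneg_left hsq (sq_nonneg c)]

/-- `z` is the foot of the altitude from `p` in the comparison triangle of `p, σ 0, σ c`. -/
theorem exists_foot (hX : CAT0Space X) {σ : ℝ → X} {c η : ℝ} (hc : 0 < c)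
    (hσ : IsGeodesicOn σ 0 c) {p : X} (hη : dist p (σ 0) + dist p (σ c) ≤ c + η) :
    ∃ z ∈ Icc (dist p (σ 0) - η) (dist p (σ 0)), ∀ t ∈ Icc 0 c,
      dist p (σ t) ^ 2 ≤ dist p (σ 0) ^ 2 - 2 * t * z + t ^ 2 := by
  obtain ⟨h₁, h₂, h₃⟩ := hσ.dist_triangle_endpoints hc.le p
  refine ⟨_, foot_mem_Icc hc h₁ h₂ h₃ hη, fun t ht => ?_⟩
  convert hX.dist_sq_le hc hσ p ht using 2
  field_simp

theorem exists_dist_sq_le (hX : CAT0Space X) {σ : ℝ → X} {c η : ℝ} (hc : 0 < c)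
    (hσ : IsGeodesicOn σ 0 c) {p : X} (hη : dist p (σ 0) + dist p (σ c) ≤ c + η)
    (hηp : η ≤ dist p (σ 0)) (hpc : dist p (σ 0) ≤ c) :
    ∃ z ∈ Icc (dist p (σ 0) - η) (dist p (σ 0)),
      dist p (σ z) ^ 2 ≤ 2 * dist p (σ 0) * η := by
  obtain ⟨z, hz, hbound⟩ := hX.exists_foot hc hσ hη
  refine ⟨z, hz, (hbound z ⟨by linarith [hz.1], hz.2.trans hpc⟩).trans ?_⟩
  nlinarith [hz.1, hz.2]

theorem dist_le_sub_div_sqrt_two (hX : CAT0Space X) {σ : ℝ → X} {c η v : ℝ}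
    (hc : 0 < c) (hσ : IsGeodesicOn σ 0 c) {p : X}
    (hη : dist p (σ 0) + dist p (σ c) ≤ c + η) (hηp : 8 * η ≤ dist p (σ 0))
    (hv : v ∈ Icc 0 c) (hvp : 5 * v ≤ 2 * dist p (σ 0)) :
    dist p (σ v) ≤ dist p (σ 0) - v / √2 := by
  obtain ⟨z, hz, hbound⟩ := hX.exists_foot hc hσ hη
  set ρ := dist p (σ 0)
  have hs : √2 ^ 2 = 2 := Real.sq_sqrt zero_le_two
  have hs₁ : √2 < 1.42 := by nlinarith [Real.one_lt_sqrt_two]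
  have hρ : 0 ≤ ρ := dist_nonneg
  have hw : v / √2 ≤ v := div_le_self hv.1 Real.one_lt_sqrt_two.le
  refine (abs_le_of_sq_le_sq' ((hbound v hv).trans ?_) (by linarith)).2
  have : 0 ≤ 2 * z - √2 * ρ - v / 2 := by
    nlinarith [hz.1, mul_le_mul_of_nonneg_left hs₁.le hρ]
  have hsq : (ρ - v / √2) ^ 2 = ρ ^ 2 - √2 * ρ * v + v ^ 2 / 2 := by
    field_simp
    linear_combination (2 * ρ * √2 * v - v ^ 2) * hs
  rw [hsq]
  nlinarith [mul_nonneg hv.1 this]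

end CAT0Space

section Concat

variable {X : Type*}

noncomputable def concatArcs (D : ℝ) (σ : ℕ → ℝ → X) (t : ℝ) : X :=
  σ ⌊t / D⌋₊ (t - ⌊t / D⌋₊ * D)

theorem sub_natFloor_div_mul_mem_Ico {D t : ℝ} (hD : 0 < D) (ht : 0 ≤ t) :
    t - ⌊t / D⌋₊ * D ∈ Ico 0 D := by
  have h₁ := Nat.floor_le (div_nonneg ht hD.le)
  have h₂ := Nat.lt_floor_add_one (t / D)
  rw [le_div_iff₀ hD] at h₁
  rw [div_lt_iff₀ hD] at h₂
  constructor <;> linarith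

theorem exists_concatArcs_eq {D s t : ℝ} (σ : ℕ → ℝ → X) (hD : 0 < D) (hs : 0 ≤ s)
    (hst : s ≤ t) :
    ∃ (m j : ℕ) (α β : ℝ), α ∈ Ico 0 D ∧ β ∈ Ico 0 D ∧
      concatArcs D σ s = σ m α ∧ concatArcs D σ t = σ (m + j) β ∧
      t - s = j * D + β - α := by
  have hmono : ⌊s / D⌋₊ ≤ ⌊t / D⌋₊ := Nat.floor_le_floor (by gcongr)
  refine ⟨⌊s / D⌋₊, ⌊t / D⌋₊ - ⌊s / D⌋₊, _, _,
    sub_natFloor_div_mul_mem_Ico hD hs,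
    sub_natFloor_div_mul_mem_Ico hD (hs.trans hst), rfl,
    by rw [Nat.add_sub_cancel' hmono]; rfl, ?_⟩
  rw [Nat.cast_sub hmono]
  ring

theorem concatArcs_mem {A : Set X} {D t : ℝ} {σ : ℕ → ℝ → X} (hD : 0 < D)
    (hσ : ∀ n, ∀ α ∈ Icc 0 D, σ n α ∈ A) (ht : 0 ≤ t) : concatArcs D σ t ∈ A :=
  hσ _ _ (Ico_subset_Icc_self (sub_natFloor_div_mul_mem_Ico hD ht))

end Concat

theorem isLocalQuasiGeodesicRay_of_le {X : Type*} [MetricSpace X] {γ : ℝ → X} {k lam : ℝ}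
    (hlam : 1 ≤ lam)
    (hγ : ∀ s t, 0 ≤ s → s ≤ t → t - s ≤ k →
      (t - s) / lam ≤ dist (γ s) (γ t) ∧ dist (γ s) (γ t) ≤ t - s) :
    IsLocalQuasiGeodesicRay k lam γ := by
  intro ε hε s hs t ht hst
  wlog hle : s ≤ t generalizing s t
  · rw [abs_sub_comm] at hst ⊢
    rw [dist_comm]
    exact this t ht s hs hst (le_of_not_ge hle)
  rw [abs_sub_comm, abs_of_nonneg (sub_nonneg.2 hle)] at hst ⊢
  obtain ⟨hlow, hup⟩ := hγ s t hs hle hst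
  constructor
  · rw [one_div_mul_eq_div]
    linarith
  · nlinarith

/-- A tail of a Lion-Man play won by the man, in which every gap `dist (L (n + 1)) (M n)` lies
within `η` of its limit `r`; `σ n` is the geodesic from `L n` to `M n`. -/
structure IsTightChase {X : Type*} [MetricSpace X] (D r η : ℝ) (L M : ℕ → X)
    (σ : ℕ → ℝ → X) : Prop where
  speed_pos : 0 < D
  gap_pos : 0 < r
  eight_mul_defect_le : 8 * η ≤ r
  defect_le_speed : η ≤ D
  geodesic : ∀ n, IsGeodesicOn (σ n) 0 (D + dist (L (n + 1)) (M n))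
  source : ∀ n, σ n 0 = L n
  lion_step : ∀ n, σ n D = L (n + 1)
  target : ∀ n, σ n (D + dist (L (n + 1)) (M n)) = M n
  man_step : ∀ n, dist (M n) (M (n + 1)) ≤ D
  le_gap : ∀ n, r ≤ dist (L (n + 1)) (M n)
  gap_le : ∀ n, dist (L (n + 1)) (M n) ≤ r + η

namespace IsTightChase

variable {X : Type*} [MetricSpace X] {D r η : ℝ} {L M : ℕ → X} {σ : ℕ → ℝ → X}

theorem dist_apply_target (h : IsTightChase D r η L M σ) (n : ℕ) {α : ℝ}
    (hα : α ∈ Icc 0 D) : dist (σ n α) (M n) = D + dist (L (n + 1)) (M n) - α := by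
  have hc := mem_Icc_add_dist ⟨h.speed_pos.le, le_rfl⟩ (L (n + 1)) (M n)
  have := (h.geodesic n).dist_eq_sub (mem_Icc_add_dist hα _ _) ⟨hc.1.trans hc.2, le_rfl⟩
    (hα.2.trans hc.2)
  rwa [h.target] at this

theorem dist_source_apply (h : IsTightChase D r η L M σ) (n : ℕ) {α : ℝ}
    (hα : α ∈ Icc 0 D) : dist (L n) (σ n α) = α := by
  rw [← h.source n, (h.geodesic n).dist_eq_sub (mem_Icc_add_dist ⟨le_rfl, h.speed_pos.le⟩ _ _)
    (mem_Icc_add_dist hα _ _) hα.1, sub_zero]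

theorem dist_le (h : IsTightChase D r η L M σ) (m : ℕ) {α β : ℝ} (hα : α ∈ Icc 0 D)
    (hβ : β ∈ Icc 0 D) (j : ℕ) : dist (σ m α) (σ (m + j) β) ≤ |j * D + β - α| := by
  induction j generalizing β with
  | zero =>
    simpa [abs_sub_comm] using
      ((h.geodesic m) α (mem_Icc_add_dist hα _ _) β (mem_Icc_add_dist hβ _ _)).le
  | succ j ih =>
    have hD : D ∈ Icc 0 D := ⟨h.speed_pos.le, le_rfl⟩
    have hjD : 0 ≤ (j : ℝ) * D := mul_nonneg j.cast_nonneg h.speed_pos.le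
    calc dist (σ m α) (σ (m + (j + 1)) β)
        ≤ dist (σ m α) (σ (m + j) D) + dist (σ (m + j) D) (σ (m + j + 1) β) :=
          dist_triangle _ _ _
      _ ≤ |j * D + D - α| + β := by
          have hlast := h.dist_source_apply (m + j + 1) hβ
          rw [← h.lion_step] at hlast
          rw [hlast]
          exact add_le_add_left (ih hD) _
      _ = |(j + 1 : ℕ) * D + β - α| := by
          rw [abs_of_nonneg (by linarith [hα.2]),
            abs_of_nonneg (by push_cast; linarith [hα.2, hβ.1])]
          push_cast
          ring

theorem triangle_defect_le (h : IsTightChase D r η L M σ) (m : ℕ) :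
    dist (M m) (σ (m + 1) 0) + dist (M m) (σ (m + 1) (D + dist (L (m + 2)) (M (m + 1)))) ≤
      D + dist (L (m + 2)) (M (m + 1)) + η := by
  rw [h.source, h.target, dist_comm]
  linarith [h.man_step m, h.gap_le m, h.le_gap (m + 1)]

theorem le_dist_succ (hX : CAT0Space X) (h : IsTightChase D r η L M σ) (m : ℕ) {α β : ℝ}
    (hα : α ∈ Icc 0 D) (hβ : β ∈ Icc 0 D) (hβr : 5 * β ≤ 2 * r) :
    D - α + β / √2 ≤ dist (σ m α) (σ (m + 1) β) := by
  have hc : 0 < D + dist (L (m + 2)) (M (m + 1)) := by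
    linarith [h.speed_pos, dist_nonneg (x := L (m + 2)) (y := M (m + 1))]
  have hcorner := hX.dist_le_sub_div_sqrt_two hc (h.geodesic (m + 1)) (h.triangle_defect_le m)
    (by rw [h.source, dist_comm]; linarith [h.eight_mul_defect_le, h.le_gap m])
    (mem_Icc_add_dist hβ _ _) (by rw [h.source, dist_comm]; linarith [h.le_gap m])
  rw [h.source, dist_comm (M m) (L (m + 1))] at hcorner
  have := dist_triangle (σ m α) (σ (m + 1) β) (M m)
  rw [h.dist_apply_target m hα, dist_comm (σ (m + 1) β)] at this
  linarith

theorem exists_near_man (hX : CAT0Space X) (h : IsTightChase D r η L M σ) (m : ℕ) :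
    ∃ z ∈ Icc (r - η) (dist (L (m + 1)) (M m)),
      dist (M m) (σ (m + 1) z) ^ 2 ≤ 2 * (r + η) * η := by
  have hc : 0 < D + dist (L (m + 2)) (M (m + 1)) := by
    linarith [h.speed_pos, dist_nonneg (x := L (m + 2)) (y := M (m + 1))]
  have hb := h.gap_le m
  have hr := h.le_gap m
  have hη : 0 ≤ η := by linarith
  obtain ⟨z, hz, hzM⟩ := hX.exists_dist_sq_le hc (h.geodesic (m + 1)) (h.triangle_defect_le m)
    (by rw [h.source, dist_comm]; linarith [h.eight_mul_defect_le])
    (by rw [h.source, dist_comm]; linarith [h.le_gap (m + 1), h.defect_le_speed])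
  rw [h.source, dist_comm (M m) (L (m + 1))] at hz hzM
  exact ⟨z, ⟨by linarith [hz.1], hz.2⟩, hzM.trans (by gcongr)⟩

/-- One round of the drift: if the man is almost `ℓ + gap` away from `P` while the lion is
within `ℓ` of `P`, the same holds one round later with `ℓ + D`, the error `E` growing to
`K * (E + Y)`. -/
theorem le_dist_target_succ (hX : CAT0Space X) (h : IsTightChase D r η L M σ) {K Y : ℝ}
    (hK₀ : 0 ≤ K) (hK : D + r + η ≤ K * (r - η)) (hY₀ : 0 ≤ Y)
    (hY : 2 * (r + η) * η ≤ Y ^ 2)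
    (n : ℕ) (P : X) {ℓ E : ℝ} (hE : 0 ≤ E) (hℓ : dist P (L (n + 1)) ≤ ℓ)
    (hPM : ℓ + dist (L (n + 1)) (M n) - E ≤ dist P (M n)) :
    ℓ + D + dist (L (n + 2)) (M (n + 1)) - K * (E + Y) ≤ dist P (M (n + 1)) := by
  obtain ⟨z, hz, hzM⟩ := h.exists_near_man hX n
  have hz₀ : 0 < z := by linarith [hz.1, h.eight_mul_defect_le, h.gap_pos]
  set c := D + dist (L (n + 2)) (M (n + 1)) with hc_def
  have hzc : z ≤ c := by linarith [hz.2, h.gap_le n, h.le_gap (n + 1), h.defect_le_speed]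
  have hconv := hX.mul_dist_le (hz₀.trans_le hzc) (h.geodesic (n + 1)) P ⟨hz₀.le, hzc⟩
  rw [h.source, h.target] at hconv
  have hMF : dist (M n) (σ (n + 1) z) ≤ Y := (abs_le_of_sq_le_sq' (hzM.trans hY) hY₀).2
  have hPF := dist_triangle P (σ (n + 1) z) (M n)
  rw [dist_comm (σ _ z)] at hPF
  -- `z * dist P (M (n + 1)) ≥ c * dist P (σ (n + 1) z) - (c - z) * ℓ`, and `c ≤ K * z`
  have h₁ := mul_le_mul_of_nonneg_left hℓ (sub_nonneg.2 hzc)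
  have h₂ := mul_le_mul_of_nonneg_left (by linarith : ℓ + dist (L (n + 1)) (M n) - E - Y ≤
    dist P (σ (n + 1) z)) (hz₀.trans_le hzc).le
  have h₃ : 0 ≤ c * (dist (L (n + 1)) (M n) - z) :=
    mul_nonneg (hz₀.trans_le hzc).le (sub_nonneg.2 hz.2)
  have h₄ : (c - K * z) * (E + Y) ≤ 0 := mul_nonpos_of_nonpos_of_nonneg
    (by nlinarith [hz.1, h.gap_le (n + 1)]) (by positivity)
  refine le_of_mul_le_mul_left ?_ hz₀
  linear_combination hconv + h₁ + h₂ + h₃ + h₄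

/-- The error `((K + 1) ^ j - 1) * Y` dominates `j` iterations of `E ↦ K * (E + Y)` from `0`. -/
theorem le_dist_target (hX : CAT0Space X) (h : IsTightChase D r η L M σ) {K Y : ℝ}
    (hK₀ : 0 ≤ K) (hK : D + r + η ≤ K * (r - η)) (hY₀ : 0 ≤ Y)
    (hY : 2 * (r + η) * η ≤ Y ^ 2)
    (m : ℕ) {α : ℝ} (hα : α ∈ Icc 0 D) (j : ℕ) :
    (j + 1) * D - α + dist (L (m + j + 1)) (M (m + j)) - ((K + 1) ^ j - 1) * Y ≤
      dist (σ m α) (M (m + j)) := by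
  induction j with
  | zero =>
    simp only [Nat.cast_zero, zero_add, add_zero, pow_zero, sub_self, zero_mul, sub_zero, one_mul,
      h.dist_apply_target m hα]
    linarith
  | succ j ih =>
    have hℓ : dist (σ m α) (L (m + j + 1)) ≤ (j + 1) * D - α := by
      have := h.dist_le m hα ⟨le_rfl, h.speed_pos.le⟩ (j + 1)
      rw [← add_assoc, h.source,
        abs_of_nonneg (by push_cast; nlinarith [hα.2, h.speed_pos])] at this
      push_cast at this
      linarith
    have hpow : 1 ≤ (K + 1) ^ j := one_le_pow₀ (by linarith)
    have hstep := h.le_dist_target_succ hX hK₀ hK hY₀ hY (m + j) (σ m α)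
      (mul_nonneg (sub_nonneg.2 hpow) hY₀) hℓ ih
    rw [← add_assoc]
    push_cast
    calc _ ≤ (j + 1) * D - α + D + dist (L (m + j + 2)) (M (m + j + 1)) -
          K * (((K + 1) ^ j - 1) * Y + Y) := by
          rw [pow_succ]
          nlinarith [mul_nonneg (sub_nonneg.2 hpow) hY₀]
      _ ≤ _ := hstep

theorem le_dist (hX : CAT0Space X) (h : IsTightChase D r η L M σ) {K Y : ℝ}
    (hK₀ : 0 ≤ K) (hK : D + r + η ≤ K * (r - η)) (hY₀ : 0 ≤ Y)
    (hY : 2 * (r + η) * η ≤ Y ^ 2)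
    (m : ℕ) {α β : ℝ} (hα : α ∈ Icc 0 D) (hβ : β ∈ Icc 0 D) (j : ℕ) :
    j * D + β - α - ((K + 1) ^ j - 1) * Y ≤ dist (σ m α) (σ (m + j) β) := by
  have hdrift := h.le_dist_target hX hK₀ hK hY₀ hY m hα j
  have := dist_triangle (σ m α) (σ (m + j) β) (M (m + j))
  rw [h.dist_apply_target _ hβ] at this
  linarith

theorem dist_concatArcs_le (h : IsTightChase D r η L M σ) {s t : ℝ} (hs : 0 ≤ s)
    (hst : s ≤ t) : dist (concatArcs D σ s) (concatArcs D σ t) ≤ t - s := by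
  obtain ⟨m, j, α, β, hα, hβ, hγs, hγt, hts⟩ := exists_concatArcs_eq σ h.speed_pos hs hst
  rw [hγs, hγt, hts, ← abs_of_nonneg (by linarith : 0 ≤ j * D + β - α)]
  exact h.dist_le m (Ico_subset_Icc_self hα) (Ico_subset_Icc_self hβ) j

theorem le_dist_concatArcs (hX : CAT0Space X) (h : IsTightChase D r η L M σ) {K Y k : ℝ}
    {m₀ : ℕ} (hK₀ : 0 ≤ K) (hK : D + r + η ≤ K * (r - η)) (hY₀ : 0 ≤ Y)
    (hY : 2 * (r + η) * η ≤ Y ^ 2) (hk : k ≤ m₀ * D)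
    (hsmall : (K + 1) ^ m₀ * Y ≤ (1 - 1 / √2) * min (2 * r / 5) D) {s t : ℝ} (hs : 0 ≤ s)
    (hst : s ≤ t) (htk : t - s ≤ k) :
    (t - s) / √2 ≤ dist (concatArcs D σ s) (concatArcs D σ t) := by
  obtain ⟨m, j, α, β, hα, hβ, hγs, hγt, hts⟩ := exists_concatArcs_eq σ h.speed_pos hs hst
  rw [hγs, hγt]
  have hD := h.speed_pos
  have hα' := Ico_subset_Icc_self hα
  have hβ' := Ico_subset_Icc_self hβ
  have hs₂ := Real.one_lt_sqrt_two
  have hdiv : (t - s) / √2 ≤ t - s := div_le_self (by linarith) hs₂.le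
  have hfar := h.le_dist hX hK₀ hK hY₀ hY m hα' hβ' j
  rcases lt_or_ge (t - s) (min (2 * r / 5) D) with hnear | hfar'
  · -- a short piece of the curve crosses at most one corner
    have hj : j < 2 := by
      by_contra! hj
      have : (2 : ℝ) ≤ j := by exact_mod_cast hj
      nlinarith [min_le_right (2 * r / 5) D, hα.2, hβ.1]
    interval_cases j
    · simp only [Nat.cast_zero, zero_mul, zero_add, pow_zero, sub_self, sub_zero, add_zero]
        at hfar hts ⊢
      linarith
    · simp only [Nat.cast_one, one_mul] at hts
      have hcorner := h.le_dist_succ hX m hα' hβ'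
        (by linarith [min_le_left (2 * r / 5) D, hα.2, hβ.1])
      have : (t - s) / √2 ≤ D - α + β / √2 := by
        rw [hts, add_sub_right_comm, add_div]
        gcongr
        exact div_le_self (by linarith [hα.2]) hs₂.le
      linarith
  · have hj : j ≤ m₀ := by
      have : (j : ℝ) < m₀ + 1 := by
        by_contra! hj
        nlinarith [hα.2, hβ.1, mul_le_mul_of_nonneg_right hj hD.le]
      exact_mod_cast Nat.lt_succ_iff.mp (by exact_mod_cast this)
    have hpow : ((K + 1) ^ j - 1) * Y ≤ (K + 1) ^ m₀ * Y :=
      mul_le_mul_of_nonneg_right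
        ((sub_le_self _ zero_le_one).trans (pow_le_pow_right₀ (by linarith) hj)) hY₀
    have hw : 0 ≤ 1 - 1 / √2 := by
      rw [sub_nonneg, div_le_one (by positivity)]
      exact hs₂.le
    have := mul_le_mul_of_nonneg_left hfar' hw
    rw [← hts] at hfar
    calc (t - s) / √2 = t - s - (1 - 1 / √2) * (t - s) := by ring
      _ ≤ _ := by linarith

theorem isLocalQuasiGeodesicRay (hX : CAT0Space X) (h : IsTightChase D r η L M σ) {k : ℝ}
    (hη : (2 * (D + 2 * r) / r + 1) ^ ⌈k / D⌉₊ * √(4 * r * η) ≤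
      (1 - 1 / √2) * min (2 * r / 5) D) :
    IsLocalQuasiGeodesicRay k (√2) (concatArcs D σ) := by
  have hr := h.gap_pos
  have hη₀ : 0 ≤ η := by linarith [h.le_gap 0, h.gap_le 0]
  have h8 := h.eight_mul_defect_le
  -- `K` bounds `(D + r + η) / (r - η)` and `Y ^ 2` bounds `2 * (r + η) * η`, as `8 * η ≤ r`
  refine isLocalQuasiGeodesicRay_of_le (by simp) fun s t hs hst htk =>
    ⟨h.le_dist_concatArcs hX (K := 2 * (D + 2 * r) / r) (Y := √(4 * r * η))
      (div_nonneg (by linarith [h.speed_pos]) hr.le)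
      ?_ (by positivity) ?_ ?_ hη hs hst htk, h.dist_concatArcs_le hs hst⟩
  · rw [div_mul_eq_mul_div, le_div_iff₀ hr]
    nlinarith [h.defect_le_speed, h.speed_pos]
  · rw [Real.sq_sqrt (by positivity)]
    nlinarith
  · exact (div_le_iff₀ h.speed_pos).1 (Nat.le_ceil _)

end IsTightChase

theorem exists_pos_defect_small {D r : ℝ} (hD : 0 < D) (hr : 0 < r) (k : ℝ) :
    ∃ η > 0, 8 * η ≤ r ∧ η ≤ D ∧
      (2 * (D + 2 * r) / r + 1) ^ ⌈k / D⌉₊ * √(4 * r * η) ≤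
        (1 - 1 / √2) * min (2 * r / 5) D := by
  set C := (2 * (D + 2 * r) / r + 1) ^ ⌈k / D⌉₊
  set W := (1 - 1 / √2) * min (2 * r / 5) D
  have hC : 0 < C := by positivity
  have hW : 0 < W := by
    have : 1 / √2 < 1 := by rw [div_lt_one (by positivity)]; exact Real.one_lt_sqrt_two
    exact mul_pos (by linarith) (lt_min (by positivity) hD)
  refine ⟨min (min (r / 8) D) (W ^ 2 / (4 * r * C ^ 2)), by positivity,
    by linarith [min_le_left (min (r / 8) D) (W ^ 2 / (4 * r * C ^ 2)), min_le_left (r / 8) D],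
    (min_le_left _ _).trans (min_le_right _ _), ?_⟩
  calc C * √(4 * r * min (min (r / 8) D) (W ^ 2 / (4 * r * C ^ 2)))
      ≤ C * √(4 * r * (W ^ 2 / (4 * r * C ^ 2))) := by gcongr; exact min_le_right _ _
    _ = W := by
      rw [show 4 * r * (W ^ 2 / (4 * r * C ^ 2)) = (W / C) ^ 2 by field_simp,
        Real.sqrt_sq (by positivity)]
      field_simp

namespace IsLionManPlay

variable {X : Type*} [MetricSpace X] {A : Set X} {D : ℝ} {L M : ℕ → X}

theorem dist_eq_min_add (hplay : IsLionManPlay A D L M) (n : ℕ) :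
    dist (L n) (M n) = min D (dist (L n) (M n)) + dist (L (n + 1)) (M n) := by
  obtain ⟨-, -, hseg, hlion, -⟩ := hplay
  obtain ⟨S, hS, hL⟩ := hseg n
  rw [← hlion n, hS.dist_add_dist_eq hL]

theorem antitone_gap (hplay : IsLionManPlay A D L M) :
    Antitone fun n => dist (L (n + 1)) (M n) := by
  refine antitone_nat_of_succ_le fun n => ?_
  have hstep := hplay.dist_eq_min_add (n + 1)
  have hman : dist (L (n + 1)) (M (n + 1)) ≤ dist (L (n + 1)) (M n) + D :=
    (dist_triangle _ _ _).trans (add_le_add le_rfl (hplay.2.2.2.2 n))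
  rcases min_cases D (dist (L (n + 1)) (M (n + 1))) with ⟨hmin, -⟩ | ⟨hmin, -⟩ <;>
    rw [hmin] at hstep <;> linarith [dist_nonneg (x := L (n + 1)) (y := M n)]

theorem exists_gap_limit (hplay : IsLionManPlay A D L M) (hman : ¬ LionWins L M) :
    ∃ r > 0, (∀ n, r ≤ dist (L (n + 1)) (M n)) ∧
      Tendsto (fun n => dist (L (n + 1)) (M n)) atTop (nhds r) := by
  have hbdd : BddBelow (range fun n => dist (L (n + 1)) (M n)) :=
    ⟨0, by rintro _ ⟨n, rfl⟩; exact dist_nonneg⟩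
  have hlim := tendsto_atTop_ciInf hplay.antitone_gap hbdd
  refine ⟨_, lt_of_le_of_ne (le_ciInf fun n => dist_nonneg) fun h0 => hman ?_,
    ciInf_le hbdd, hlim⟩
  rw [LionWins, h0]
  exact hlim

theorem exists_isTightChase (hplay : IsLionManPlay A D L M) (hconv : GeodesicConvex A)
    (hD : 0 < D) {r η : ℝ} (hr : 0 < r) (h8 : 8 * η ≤ r) (hηD : η ≤ D)
    (hgap : ∀ n, r ≤ dist (L (n + 1)) (M n)) {N : ℕ}
    (hN : dist (L (N + 1)) (M N) ≤ r + η) :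
    ∃ σ : ℕ → ℝ → X, IsTightChase D r η (fun n => L (N + n)) (fun n => M (N + n)) σ ∧
      ∀ n, ∀ α ∈ Icc 0 D, σ n α ∈ A := by
  have hanti := hplay.antitone_gap
  have hlen n : dist (L n) (M n) = D + dist (L (n + 1)) (M n) := by
    have := hplay.dist_eq_min_add n
    rcases min_cases D (dist (L n) (M n)) with ⟨hmin, -⟩ | ⟨hmin, -⟩ <;>
      rw [hmin] at this <;> linarith [hgap n]
  obtain ⟨hLA, hMA, hseg, hlion, hman⟩ := hplay
  have hσ n : ∃ g : ℝ → X, IsGeodesicOn g 0 (D + dist (L (n + 1)) (M n)) ∧ g 0 = L n ∧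
      g D = L (n + 1) ∧ g (D + dist (L (n + 1)) (M n)) = M n ∧
      ∀ α ∈ Icc 0 D, g α ∈ A := by
    obtain ⟨S, hS, hLS⟩ := hseg n
    obtain ⟨g, hg, hg0, hg1, rfl⟩ := hS.exists_isGeodesicOn
    obtain ⟨w, hw, hgw⟩ := hLS
    have hwD : w = D := by
      have := hlion n
      rw [← hg0, ← hgw, hg.dist_eq_sub ⟨le_rfl, dist_nonneg⟩ hw hw.1, hg0, hlen n,
        min_eq_left (by linarith [dist_nonneg (x := L (n + 1)) (y := M n)])] at this
      linarith
    subst hwD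
    have hsub := hconv _ (hLA n) _ (hMA n) _ hS
    rw [hlen n] at hg hg1 hsub
    exact ⟨g, hg, hg0, hgw, hg1, fun α hα => hsub ⟨α, mem_Icc_add_dist hα _ _, rfl⟩⟩
  choose σ hgeo hsource hlion htarget hmem using hσ
  refine ⟨fun n => σ (N + n), ⟨hD, hr, h8, hηD, fun n => hgeo (N + n),
    fun n => hsource (N + n), fun n => hlion (N + n), fun n => htarget (N + n),
    fun n => hman (N + n), fun n => hgap (N + n), fun n => ?_⟩, fun n => hmem (N + n)⟩
  exact (hanti (Nat.le_add_right N n)).trans hN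

end IsLionManPlay

theorem stmt13_general {X : Type*} [MetricSpace X] (hX : CAT0Space X)
    (A : Set X) (hconv : GeodesicConvex A)
    (h : ∃ D > (0:ℝ), ∃ L M : ℕ → X, IsLionManPlay A D L M ∧ ¬ LionWins L M) :
    ∀ k > (0:ℝ), ∃ γ : ℝ → X, IsLocalQuasiGeodesicRay k (Real.sqrt 2) γ ∧
      ∀ t ∈ Set.Ici (0:ℝ), γ t ∈ A := by
  intro k _
  obtain ⟨D, hD, L, M, hplay, hman⟩ := h
  obtain ⟨r, hr, hgap, hlim⟩ := hplay.exists_gap_limit hman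
  obtain ⟨η, hη, h8, hηD, hsmall⟩ := exists_pos_defect_small hD hr k
  obtain ⟨N, hN⟩ := (hlim.eventually (eventually_le_nhds (lt_add_of_pos_right r hη))).exists
  obtain ⟨σ, hchase, hmem⟩ := hplay.exists_isTightChase hconv hD hr h8 hηD hgap hN
  exact ⟨concatArcs D σ, hchase.isLocalQuasiGeodesicRay hX hsmall,
    fun t ht => concatArcs_mem hD hmem ht⟩

/-- If there is a play of the Lion-Man game in a nonempty convex subset `A` of a CAT(0)
space in which the man wins, then for every `k > 0` there exists a `k`-local
`√2`-quasi-geodesic ray contained in `A`. -/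
theorem stmt13 {X : Type*} [MetricSpace X] (hX : CAT0Space X)
    (A : Set X) (hA : A.Nonempty) (hconv : GeodesicConvex A)
    (h : ∃ D > (0:ℝ), ∃ L M : ℕ → X, IsLionManPlay A D L M ∧ ¬ LionWins L M) :
    ∀ k > (0:ℝ), ∃ γ : ℝ → X, IsLocalQuasiGeodesicRay k (Real.sqrt 2) γ ∧
      ∀ t ∈ Set.Ici (0:ℝ), γ t ∈ A :=
  stmt13_general hX A hconv h
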